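/- If ‖h‖_{∞,Q} < ∞ and I_α(P‖Q) < ∞ for some α ∈ (1,2], then choosing the truncation boundary τ_n = (n·I_α(P‖Q)/ln(2/δ))^{1/α}, the truncated likelihood ratio estimator satisfies, for all δ ∈ (0,1): Pr( |h̄_n^{Tru} − E_P[h]| ≤ ‖h‖_{∞,Q}(√2 + 4/3)(ln(2/δ)/n)^{1−1/α} I_α(P‖Q)^{1/α} ) ≥ 1 − δ. -/

import Mathlib

/-!
Truncating the likelihood ratio at `τ` makes the summands `h · min(l, τ)` bounded by `‖h‖∞ τ`,
with second moment at most `‖h‖∞² τ^(2-α) I_α` because `min(l, τ)² ≤ τ^(2-α) l^α`, at the cost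
of a bias at most `‖h‖∞ τ^(1-α) I_α` because `l - min(l, τ) ≤ τ^(1-α) l^α`. Bernstein's
inequality, obtained by the Chernoff method from `eᵗ ≤ 1 + t + t² / (2 (1 - t/3))` for `t < 3`,
controls the fluctuation of the sample mean with probability `1 - 2e^(-x)`. For `x = ln(2/δ)`
and `τ^α = n I_α / ln(2/δ)`, the square-root term, the linear term and the bias are `√2`, `1/3`
and `1` times `‖h‖∞ τ ln(2/δ) / n = ‖h‖∞ (ln(2/δ)/n)^(1-1/α) I_α^(1/α)`.
-/

open MeasureTheory ProbabilityTheory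

noncomputable def lr {X : Type*} [MeasurableSpace X] (P Q : Measure X) (x : X) : ℝ :=
  (P.rnDeriv Q x).toReal

noncomputable def Ialpha {X : Type*} [MeasurableSpace X] (P Q : Measure X) (α : ℝ) : ℝ :=
  ∫ x, lr P Q x ^ α ∂Q

open Real

lemma le_of_hasDerivAt_of_monotone {F F' : ℝ → ℝ} (hF : ∀ t, HasDerivAt F (F' t) t)
    (hF' : Monotone F') {a : ℝ} (ha : F' a = 0) (t : ℝ) : F a ≤ F t := by
  have hcont : Continuous F := continuous_iff_continuousAt.2 fun t => (hF t).continuousAt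
  rcases le_total a t with hat | hta
  · refine monotoneOn_of_hasDerivWithinAt_nonneg (convex_Ici a) hcont.continuousOn
      (fun x _ => (hF x).hasDerivWithinAt) (fun x hx => ?_) Set.self_mem_Ici hat hat
    rw [interior_Ici] at hx
    exact ha ▸ hF' (le_of_lt hx)
  · refine antitoneOn_of_hasDerivWithinAt_nonpos (convex_Iic a) hcont.continuousOn
      (fun x _ => (hF x).hasDerivWithinAt) (fun x hx => ?_) hta Set.self_mem_Iic hta
    rw [interior_Iic] at hx
    exact ha ▸ hF' (le_of_lt hx)

lemma Real.exp_le_one_add_add_sq_div {t : ℝ} (ht : t < 3) :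
    exp t ≤ 1 + t + t ^ 2 / (2 * (1 - t / 3)) := by
  have hF : ∀ t, HasDerivAt (fun t => 2 + 4 * t / 3 + t ^ 2 / 3 - (2 - 2 * t / 3) * exp t)
      (4 / 3 + 2 * t / 3 - (4 / 3 - 2 * t / 3) * exp t) t := fun t => by
    refine ((((hasDerivAt_id' t).const_mul 4).div_const 3 |>.const_add 2 |>.add
      ((hasDerivAt_pow 2 t).div_const 3)).sub ((((hasDerivAt_id' t).const_mul 2).div_const 3
        |>.const_sub 2).mul (hasDerivAt_exp t))).congr_deriv ?_
    push_cast; ring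
  have hF' : ∀ t, HasDerivAt (fun t => 4 / 3 + 2 * t / 3 - (4 / 3 - 2 * t / 3) * exp t)
      (2 / 3 * (1 - (1 - t) * exp t)) t := fun t => by
    refine ((((hasDerivAt_id' t).const_mul 2).div_const 3).const_add (4 / 3)).sub
      ((((hasDerivAt_id' t).const_mul 2).div_const 3 |>.const_sub (4 / 3)).mul
        (hasDerivAt_exp t)) |>.congr_deriv ?_
    ring
  -- `F(t) = 2 + 4t/3 + t²/3 - (2 - 2t/3)eᵗ` has `F(0) = F'(0) = 0` and
  -- `F'' = (2/3)(1 - (1 - t)eᵗ) ≥ 0`, hence `F ≥ 0`.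
  have hmono := monotone_of_hasDerivAt_nonneg hF' fun t => by
    have : (1 - t) * exp t ≤ 1 :=
      calc (1 - t) * exp t ≤ exp (-t) * exp t := by gcongr; linarith [add_one_le_exp (-t)]
        _ = 1 := by rw [← exp_add, neg_add_cancel, exp_zero]
    simp only [Pi.zero_apply]
    linarith
  have hFt := le_of_hasDerivAt_of_monotone hF hmono (a := 0) (by simp) t
  have h3 : (3 : ℝ) - t ≠ 0 := by linarith
  have hquot : 1 + t + t ^ 2 / (2 * (1 - t / 3)) - exp t
      = (2 + 4 * t / 3 + t ^ 2 / 3 - (2 - 2 * t / 3) * exp t) / (2 * (1 - t / 3)) := by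
    field_simp; ring
  rw [← sub_nonneg, hquot]
  exact div_nonneg (by simpa using hFt) (by linarith)

section Bernstein

variable {Ω : Type*} [MeasurableSpace Ω] {μ : Measure Ω}

lemma integrable_exp_mul_of_ae_abs_le [IsFiniteMeasure μ] {Y : Ω → ℝ} (hY : Measurable Y)
    {K : ℝ} (hYK : ∀ᵐ ω ∂μ, |Y ω| ≤ K) (t : ℝ) : Integrable (fun ω => exp (t * Y ω)) μ := by
  refine .of_bound (hY.const_mul t).exp.aestronglyMeasurable (exp (|t| * K)) ?_
  filter_upwards [hYK] with ω hω
  rw [norm_of_nonneg (exp_pos _).le, exp_le_exp]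
  calc t * Y ω ≤ |t * Y ω| := le_abs_self _
    _ = |t| * |Y ω| := abs_mul t (Y ω)
    _ ≤ |t| * K := by gcongr

variable [IsProbabilityMeasure μ]

lemma ofReal_one_sub_le_measure_of_measure_compl_le {A : Set Ω} {a : ℝ} (ha : 0 ≤ a)
    (hA : μ Aᶜ ≤ ENNReal.ofReal a) : ENNReal.ofReal (1 - a) ≤ μ A := by
  rw [ENNReal.ofReal_sub _ ha, ENNReal.ofReal_one, tsub_le_iff_right]
  calc 1 = μ (A ∪ Aᶜ) := by rw [Set.union_compl_self, measure_univ]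
    _ ≤ μ A + μ Aᶜ := measure_union_le A Aᶜ
    _ ≤ μ A + ENNReal.ofReal a := by gcongr

lemma mgf_le_exp_of_ae_abs_le {Y : Ω → ℝ} (hY : Measurable Y) {K v t : ℝ}
    (hYK : ∀ᵐ ω ∂μ, |Y ω| ≤ K) (hYv : ∫ ω, Y ω ^ 2 ∂μ ≤ v) (ht : 0 ≤ t) (htK : t * K < 3) :
    mgf Y μ t ≤ exp (t * μ[Y] + t ^ 2 * v / (2 * (1 - t * K / 3))) := by
  set D := 2 * (1 - t * K / 3) with hDdef
  have hD : 0 < D := by rw [hDdef]; linarith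
  have hYint : Integrable Y μ := .of_bound hY.aestronglyMeasurable K (by simpa using hYK)
  have hY2int : Integrable (fun ω => Y ω ^ 2) μ :=
    .of_bound (hY.pow_const 2).aestronglyMeasurable (K ^ 2) (by
      filter_upwards [hYK] with ω hω
      simpa [sq_abs] using pow_le_pow_left₀ (abs_nonneg _) hω 2)
  have hpt : ∀ᵐ ω ∂μ, exp (t * Y ω) ≤ 1 + t * Y ω + t ^ 2 * Y ω ^ 2 / D := by
    filter_upwards [hYK] with ω hω
    have htY : t * Y ω ≤ t * K := by gcongr; exact (le_abs_self _).trans hω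
    calc exp (t * Y ω) ≤ 1 + t * Y ω + (t * Y ω) ^ 2 / (2 * (1 - t * Y ω / 3)) :=
          exp_le_one_add_add_sq_div (htY.trans_lt htK)
      _ ≤ 1 + t * Y ω + (t * Y ω) ^ 2 / D := by gcongr; rw [hDdef]; linarith
      _ = 1 + t * Y ω + t ^ 2 * Y ω ^ 2 / D := by ring
  have hlin : Integrable (fun ω => 1 + t * Y ω) μ := (integrable_const 1).add (hYint.const_mul t)
  have hquad : Integrable (fun ω => t ^ 2 * Y ω ^ 2 / D) μ := (hY2int.const_mul _).div_const D
  calc mgf Y μ t ≤ ∫ ω, (1 + t * Y ω + t ^ 2 * Y ω ^ 2 / D) ∂μ :=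
        integral_mono_ae (integrable_exp_mul_of_ae_abs_le hY hYK t) (hlin.add hquad) hpt
    _ = 1 + t * μ[Y] + t ^ 2 * (∫ ω, Y ω ^ 2 ∂μ) / D := by
        rw [integral_add hlin hquad, integral_add (integrable_const 1) (hYint.const_mul t),
          integral_div, integral_const_mul, integral_const_mul]
        simp
    _ ≤ 1 + t * μ[Y] + t ^ 2 * v / D := by gcongr
    _ ≤ exp (t * μ[Y] + t ^ 2 * v / D) := by linarith [add_one_le_exp (t * μ[Y] + t ^ 2 * v / D)]

lemma measure_sum_ge_le_exp_neg_of_iIndepFun {n : ℕ} (hn : 0 < n) {Y : Fin n → Ω → ℝ}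
    (hY : ∀ i, Measurable (Y i)) (hindep : iIndepFun Y μ) {K v m x : ℝ}
    (hYK : ∀ i, ∀ᵐ ω ∂μ, |Y i ω| ≤ K) (hm : ∀ i, μ[Y i] = m)
    (hYv : ∀ i, ∫ ω, Y i ω ^ 2 ∂μ ≤ v) (hv : 0 < v) (hx : 0 < x) :
    μ {ω | n * m + √(2 * n * v * x) + K * x / 3 ≤ ∑ i, Y i ω} ≤ ENNReal.ofReal (exp (-x)) := by
  have hK : 0 ≤ K := (abs_nonneg _).trans (hYK ⟨0, hn⟩).exists.choose_spec
  set s := √(2 * n * v * x)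
  have hs : 0 < s := sqrt_pos.2 (by positivity)
  have hs2 : s ^ 2 = 2 * n * v * x := sq_sqrt (by positivity)
  -- the exponent minimising the Chernoff bound below
  set t := s / (n * v + K / 3 * s) with ht_def
  have hden : 0 < n * v + K / 3 * s := by positivity
  have ht : 0 ≤ t := by positivity
  have htK : t * K < 3 := by
    rw [ht_def, div_mul_eq_mul_div, div_lt_iff₀ hden]
    nlinarith
  have hSK : ∀ᵐ ω ∂μ, |∑ i, Y i ω| ≤ n * K := by
    filter_upwards [ae_all_iff.2 hYK] with ω hω
    refine (Finset.abs_sum_le_sum_abs _ _).trans ?_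
    simpa using Finset.sum_le_sum fun i (_ : i ∈ Finset.univ) => hω i
  have hchernoff := measure_ge_le_exp_mul_mgf (n * m + s + K * x / 3) ht
    (integrable_exp_mul_of_ae_abs_le (Finset.measurable_sum _ fun i _ => hY i) hSK t)
  have hmgf : mgf (fun ω => ∑ i, Y i ω) μ t
      ≤ exp (n * (t * m + t ^ 2 * v / (2 * (1 - t * K / 3)))) := by
    rw [← Finset.sum_fn, hindep.mgf_sum hY, exp_nat_mul]
    refine (Finset.prod_le_prod (fun i _ => mgf_nonneg) fun i _ =>
      hm i ▸ mgf_le_exp_of_ae_abs_le (hY i) (hYK i) (hYv i) ht htK).trans_eq ?_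
    simp
  have hexponent : -t * (n * m + s + K * x / 3)
      + n * (t * m + t ^ 2 * v / (2 * (1 - t * K / 3))) = -x := by
    have : 1 - t * K / 3 = n * v / (n * v + K / 3 * s) := by
      rw [ht_def]; field_simp; ring
    rw [this, ht_def]
    field_simp
    linear_combination -3 * hs2
  rw [ENNReal.le_ofReal_iff_toReal_le (measure_ne_top _ _) (exp_pos _).le, ← hexponent,
    exp_add]
  calc (μ {ω | n * m + s + K * x / 3 ≤ ∑ i, Y i ω}).toReal
      = μ.real {ω | n * m + s + K * x / 3 ≤ ∑ i, Y i ω} := rfl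
    _ ≤ _ := hchernoff
    _ ≤ _ := by gcongr

lemma measure_abs_sum_sub_gt_le_of_iIndepFun {n : ℕ} (hn : 0 < n) {Y : Fin n → Ω → ℝ}
    (hY : ∀ i, Measurable (Y i)) (hindep : iIndepFun Y μ) {K v m x : ℝ}
    (hYK : ∀ i, ∀ᵐ ω ∂μ, |Y i ω| ≤ K) (hm : ∀ i, μ[Y i] = m)
    (hYv : ∀ i, ∫ ω, Y i ω ^ 2 ∂μ ≤ v) (hv : 0 < v) (hx : 0 < x) :
    μ {ω | √(2 * n * v * x) + K * x / 3 < |∑ i, Y i ω - n * m|}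
      ≤ ENNReal.ofReal (2 * exp (-x)) := by
  have hupper := measure_sum_ge_le_exp_neg_of_iIndepFun hn hY hindep hYK hm hYv hv hx
  have hlower := measure_sum_ge_le_exp_neg_of_iIndepFun hn (Y := fun i ω => -Y i ω) (m := -m)
    (fun i => (hY i).neg) (hindep.comp (fun _ y => -y) fun _ => measurable_neg)
    (fun i => by simpa using hYK i) (fun i => by simp [integral_neg, hm i])
    (fun i => by simpa using hYv i) hv hx
  calc μ {ω | √(2 * n * v * x) + K * x / 3 < |∑ i, Y i ω - n * m|}
      ≤ μ ({ω | n * m + √(2 * n * v * x) + K * x / 3 ≤ ∑ i, Y i ω} ∪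
          {ω | n * -m + √(2 * n * v * x) + K * x / 3 ≤ ∑ i, -Y i ω}) := by
        refine measure_mono fun ω hω => ?_
        rcases lt_abs.1 hω.out with h | h
        · left; simp only [Set.mem_ofPred_eq]; linarith
        · right; simp only [Set.mem_ofPred_eq, Finset.sum_neg_distrib]; linarith
    _ ≤ ENNReal.ofReal (exp (-x)) + ENNReal.ofReal (exp (-x)) :=
        (measure_union_le _ _).trans (add_le_add hupper hlower)
    _ = ENNReal.ofReal (2 * exp (-x)) := by
        rw [← ENNReal.ofReal_add (exp_pos _).le (exp_pos _).le, two_mul]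

end Bernstein

lemma ofReal_one_sub_le_measure_abs_sampleMean_sub_le {X Ω : Type*} [MeasurableSpace X]
    [MeasurableSpace Ω] {μ : Measure Ω} [IsProbabilityMeasure μ] {Q : Measure X} {n : ℕ}
    (hn : 0 < n) {Xs : Fin n → Ω → X} (hXs : ∀ i, Measurable (Xs i))
    (hid : ∀ i, μ.map (Xs i) = Q) (hindep : iIndepFun Xs μ) {g : X → ℝ} (hg : Measurable g)
    {K v x : ℝ} (hgK : ∀ᵐ y ∂Q, |g y| ≤ K) (hgv : ∫ y, g y ^ 2 ∂Q ≤ v) (hv : 0 < v)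
    (hx : 0 < x) :
    ENNReal.ofReal (1 - 2 * exp (-x)) ≤ μ {ω | |(1 / (n : ℝ)) * ∑ i, g (Xs i ω) - ∫ y, g y ∂Q|
      ≤ (√(2 * n * v * x) + K * x / 3) / n} := by
  have hn' : (0 : ℝ) < n := Nat.cast_pos.2 hn
  have hintegral (f : X → ℝ) (hf : Measurable f) (i : Fin n) :
      ∫ ω, f (Xs i ω) ∂μ = ∫ y, f y ∂Q := by
    rw [← hid i, integral_map (hXs i).aemeasurable hf.aestronglyMeasurable]
  refine ofReal_one_sub_le_measure_of_measure_compl_le (by positivity) <|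
    (measure_mono fun ω hω => ?_).trans <| measure_abs_sum_sub_gt_le_of_iIndepFun hn
      (Y := fun i ω => g (Xs i ω)) (fun i => hg.comp (hXs i))
      (hindep.comp (fun _ => g) fun _ => hg)
      (fun i => ae_of_ae_map (hXs i).aemeasurable (hid i ▸ hgK))
      (hintegral g hg) (fun i => (hintegral (g · ^ 2) (hg.pow_const 2) i).trans_le hgv) hv hx
  simp only [Set.mem_compl_iff, Set.mem_ofPred_eq, not_le] at hω ⊢
  rw [div_lt_iff₀ hn'] at hω
  calc _ < |1 / (n : ℝ) * ∑ i, g (Xs i ω) - ∫ y, g y ∂Q| * n := hω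
    _ = |∑ i, g (Xs i ω) - n * ∫ y, g y ∂Q| := by
        rw [← abs_of_pos hn', ← abs_mul, abs_of_pos hn']
        congr 1
        field_simp

lemma min_sq_le_rpow_mul_rpow {l τ α : ℝ} (hl : 0 ≤ l) (hτ : 0 ≤ τ) (hα0 : 0 ≤ α)
    (hα2 : α ≤ 2) : min l τ ^ 2 ≤ τ ^ (2 - α) * l ^ α := by
  have hmin : 0 ≤ min l τ := le_min hl hτ
  calc min l τ ^ 2 = min l τ ^ (2 - α) * min l τ ^ α := by
        rw [← rpow_add' hmin (by norm_num), sub_add_cancel, rpow_two]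
    _ ≤ τ ^ (2 - α) * l ^ α := mul_le_mul (rpow_le_rpow hmin (min_le_right l τ) (by linarith))
        (rpow_le_rpow hmin (min_le_left l τ) hα0) (by positivity) (by positivity)

lemma sub_min_le_rpow_mul_rpow {l τ α : ℝ} (hl : 0 ≤ l) (hτ : 0 < τ) (hα : 1 ≤ α) :
    l - min l τ ≤ τ ^ (1 - α) * l ^ α := by
  rcases le_total l τ with hlτ | hτl
  · rw [min_eq_left hlτ, sub_self]
    positivity
  · calc l - min l τ ≤ l ^ (1 - α) * l ^ α := by
          rw [min_eq_right hτl, ← rpow_add (hτ.trans_le hτl), sub_add_cancel, rpow_one]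
          linarith
      _ ≤ τ ^ (1 - α) * l ^ α :=
          mul_le_mul_of_nonneg_right (rpow_le_rpow_of_nonpos hτ hτl (by linarith)) (by positivity)

section LikelihoodRatio

variable {X : Type*} [MeasurableSpace X] {P Q : Measure X}

lemma measurable_lr : Measurable (lr P Q) := (Measure.measurable_rnDeriv P Q).ennreal_toReal

lemma lr_nonneg (x : X) : 0 ≤ lr P Q x := ENNReal.toReal_nonneg

lemma integral_mul_lr [SigmaFinite P] [SigmaFinite Q] (hPQ : P ≪ Q) (h : X → ℝ) :
    ∫ x, h x * lr P Q x ∂Q = ∫ x, h x ∂P := by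
  simp_rw [mul_comm (h _)]
  exact integral_toReal_rnDeriv_mul hPQ

lemma Ialpha_pos [IsProbabilityMeasure P] [SigmaFinite Q] (hPQ : P ≪ Q) {α : ℝ}
    (hI : Integrable (fun x => lr P Q x ^ α) Q) : 0 < Ialpha P Q α := by
  refine (integral_nonneg fun x => rpow_nonneg (lr_nonneg x) α).lt_of_ne fun hzero => ?_
  have hlr : lr P Q =ᵐ[Q] 0 := by
    filter_upwards [(integral_eq_zero_iff_of_nonneg
      (fun x => rpow_nonneg (lr_nonneg x) α) hI).1 hzero.symm] with x hx
    exact ((rpow_eq_zero_iff_of_nonneg (lr_nonneg x)).1 hx).1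
  have hone : ∫ x, lr P Q x ∂Q = P.real Set.univ := Measure.integral_toReal_rnDeriv hPQ
  rw [integral_congr_ae hlr] at hone
  simp at hone

variable {h : X → ℝ} {C α τ : ℝ}

lemma integral_sq_mul_min_lr_le (hC : ∀ᵐ x ∂Q, |h x| ≤ C) (hα0 : 0 ≤ α) (hα2 : α ≤ 2)
    (hτ : 0 ≤ τ) (hI : Integrable (fun x => lr P Q x ^ α) Q) :
    ∫ x, (h x * min (lr P Q x) τ) ^ 2 ∂Q ≤ C ^ 2 * τ ^ (2 - α) * Ialpha P Q α := by
  rw [Ialpha, ← integral_const_mul]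
  refine integral_mono_of_nonneg (.of_forall fun x => sq_nonneg _) (hI.const_mul _) ?_
  filter_upwards [hC] with x hx
  rw [mul_pow, mul_assoc]
  exact mul_le_mul (sq_le_sq' (neg_le_of_abs_le hx) (le_of_abs_le hx))
    (min_sq_le_rpow_mul_rpow (lr_nonneg x) hτ hα0 hα2) (sq_nonneg _) (sq_nonneg C)

lemma abs_integral_mul_min_lr_sub_le [IsFiniteMeasure P] [IsFiniteMeasure Q] (hPQ : P ≪ Q)
    (hh : Measurable h) (hC : ∀ᵐ x ∂Q, |h x| ≤ C) (hα : 1 ≤ α) (hτ : 0 < τ)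
    (hI : Integrable (fun x => lr P Q x ^ α) Q) :
    |∫ x, h x * min (lr P Q x) τ ∂Q - ∫ x, h x ∂P| ≤ C * τ ^ (1 - α) * Ialpha P Q α := by
  have htrunc : Integrable (fun x => h x * min (lr P Q x) τ) Q := by
    refine .of_bound (hh.mul (measurable_lr.min measurable_const)).aestronglyMeasurable
      (C * τ) ?_
    filter_upwards [hC] with x hx
    rw [norm_mul, norm_of_nonneg (le_min (lr_nonneg x) hτ.le)]
    exact mul_le_mul hx (min_le_right _ _) (le_min (lr_nonneg x) hτ.le)
      ((abs_nonneg _).trans hx)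
  have hfull : Integrable (fun x => h x * lr P Q x) Q := by
    refine ((Measure.integrable_toReal_rnDeriv : Integrable (lr P Q) Q).const_mul C).mono'
      (hh.mul measurable_lr).aestronglyMeasurable ?_
    filter_upwards [hC] with x hx
    rw [norm_mul, norm_of_nonneg (lr_nonneg x)]
    exact mul_le_mul_of_nonneg_right hx (lr_nonneg x)
  rw [← integral_mul_lr hPQ, ← integral_sub htrunc hfull, Ialpha, ← integral_const_mul,
    ← Real.norm_eq_abs]
  refine norm_integral_le_of_norm_le (hI.const_mul _) ?_
  filter_upwards [hC] with x hx
  rw [← mul_sub, norm_mul, norm_sub_rev, norm_of_nonneg (sub_nonneg.2 (min_le_left _ _)),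
    mul_assoc]
  exact mul_le_mul hx (sub_min_le_rpow_mul_rpow (lr_nonneg x) hτ hα)
    (sub_nonneg.2 (min_le_left _ _)) ((abs_nonneg _).trans hx)

end LikelihoodRatio

theorem truncated_lr_concentration {X Ω : Type*} [MeasurableSpace X] [MeasurableSpace Ω]
    {P Q : Measure X} [IsProbabilityMeasure P] [IsProbabilityMeasure Q] (hPQ : P ≪ Q)
    {h : X → ℝ} (hh : Measurable h) {C : ℝ} (hC : ∀ᵐ x ∂Q, |h x| ≤ C) {α : ℝ} (hα1 : 1 ≤ α)
    (hα2 : α ≤ 2) (hI : Integrable (fun x => lr P Q x ^ α) Q) {μ : Measure Ω}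
    [IsProbabilityMeasure μ] {n : ℕ} (hn : 0 < n) {Xs : Fin n → Ω → X}
    (hXs : ∀ i, Measurable (Xs i)) (hid : ∀ i, μ.map (Xs i) = Q) (hindep : iIndepFun Xs μ)
    {τ x : ℝ} (hτ : 0 < τ) (hx : 0 < x) :
    ENNReal.ofReal (1 - 2 * exp (-x)) ≤
      μ {ω | |(1 / (n : ℝ)) * ∑ i, h (Xs i ω) * min (lr P Q (Xs i ω)) τ - ∫ y, h y ∂P| ≤
        (√(2 * n * (C ^ 2 * τ ^ (2 - α) * Ialpha P Q α) * x) + C * τ * x / 3) / n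
          + C * τ ^ (1 - α) * Ialpha P Q α} := by
  have hC0 : 0 ≤ C := (abs_nonneg _).trans hC.exists.choose_spec
  have hIpos := Ialpha_pos hPQ hI
  rcases hC0.eq_or_lt with rfl | hCpos
  -- Bernstein's inequality needs a positive variance proxy; for `C = 0` the event is almost sure.
  · have hh0 : h =ᵐ[Q] 0 := by filter_upwards [hC] with y hy using abs_nonpos_iff.1 hy
    have hEP : ∫ y, h y ∂P = 0 := integral_eq_zero_of_ae (hPQ.ae_le hh0)
    refine ofReal_one_sub_le_measure_of_measure_compl_le (by positivity)
      (le_of_eq_of_le ?_ zero_le)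
    rw [← mem_ae_iff]
    filter_upwards [ae_all_iff.2 fun i => ae_of_ae_map (hXs i).aemeasurable (hid i ▸ hh0)]
      with ω hω
    simp [hω, hEP]
  · have hgK : ∀ᵐ y ∂Q, |h y * min (lr P Q y) τ| ≤ C * τ := by
      filter_upwards [hC] with y hy
      rw [abs_mul, abs_of_nonneg (le_min (lr_nonneg y) hτ.le)]
      exact mul_le_mul hy (min_le_right _ _) (le_min (lr_nonneg y) hτ.le) hC0
    refine (ofReal_one_sub_le_measure_abs_sampleMean_sub_le hn hXs hid hindep
      (g := fun y => h y * min (lr P Q y) τ) (hh.mul (measurable_lr.min measurable_const)) hgK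
      (integral_sq_mul_min_lr_le hC (by linarith) hα2 hτ.le hI) (by positivity) hx).trans
      (measure_mono fun ω hω => (abs_sub_le _ _ _).trans
        (add_le_add hω (abs_integral_mul_min_lr_sub_le hPQ hh hC hα1 hτ hI)))

lemma truncated_lr_bound_eq {n I L α C τ : ℝ} (hn : 0 < n) (hI : 0 < I) (hL : 0 < L)
    (hα : 0 < α) (hC : 0 ≤ C) (hτ : τ = (n * I / L) ^ (1 / α)) :
    (√(2 * n * (C ^ 2 * τ ^ (2 - α) * I) * L) + C * τ * L / 3) / n + C * τ ^ (1 - α) * I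
      = C * (√2 + 4 / 3) * (L / n) ^ (1 - 1 / α) * I ^ (1 / α) := by
  have hτpos : 0 < τ := hτ ▸ by positivity
  have hτα : τ ^ α = n * I / L := by
    rw [hτ, ← rpow_mul (by positivity), one_div_mul_cancel hα.ne', rpow_one]
  have hτ1 : τ ^ (1 - α) * I = τ * L / n := by
    rw [rpow_sub hτpos, rpow_one, hτα]; field_simp
  have hτ2 : τ ^ (2 - α) * I = τ ^ 2 * L / n := by
    rw [rpow_sub hτpos, rpow_two, hτα]; field_simp
  have hsqrt : √(2 * n * (C ^ 2 * τ ^ (2 - α) * I) * L) = √2 * (C * τ * L) := by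
    rw [mul_assoc (C ^ 2), hτ2, ← sqrt_sq (by positivity : 0 ≤ C * τ * L), ← sqrt_mul zero_le_two]
    congr 1
    field_simp
  have hrate : (L / n) ^ (1 - 1 / α) * I ^ (1 / α) = τ * L / n := by
    have : I ^ (1 / α) = (L / n) ^ (1 / α) * τ := by
      rw [hτ, ← mul_rpow (by positivity) (by positivity)]
      congr 1
      field_simp
    rw [this, ← mul_assoc, ← rpow_add (by positivity), sub_add_cancel, rpow_one]
    ring
  rw [hsqrt, mul_assoc C (τ ^ _), hτ1, mul_assoc (C * _), hrate]
  field_simp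
  ring

/-- Exponential concentration of the truncated likelihood-ratio estimator with the
simple truncation boundary `τₙ = (n·I_α(P‖Q)/ln(2/δ))^{1/α}`. -/
theorem truncated_lr_exponential_concentration_inftyNorm
    {X : Type*} [MeasurableSpace X] {Ω : Type*} [MeasurableSpace Ω]
    (P Q : Measure X) [IsProbabilityMeasure P] [IsProbabilityMeasure Q]
    (hPQ : P ≪ Q) (h : X → ℝ) (hmeas : Measurable h)
    (hinf : eLpNorm h ⊤ Q < ⊤)
    (α : ℝ) (hα1 : 1 < α) (hα2 : α ≤ 2)
    (hI : Integrable (fun x => lr P Q x ^ α) Q)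
    (μ : Measure Ω) [IsProbabilityMeasure μ]
    (n : ℕ) (hn : 0 < n) (Xs : Fin n → Ω → X)
    (hXmeas : ∀ i, Measurable (Xs i))
    (hid : ∀ i, Measure.map (Xs i) μ = Q)
    (hindep : iIndepFun Xs μ)
    (δ : ℝ) (hδ0 : 0 < δ) (hδ1 : δ < 1)
    (τ : ℝ) (hτdef : τ = ((n : ℝ) * Ialpha P Q α / Real.log (2 / δ)) ^ (1 / α)) :
    ENNReal.ofReal (1 - δ) ≤
      μ {ω | |(1 / (n : ℝ)) * ∑ i, h (Xs i ω) * min (lr P Q (Xs i ω)) τ - ∫ x, h x ∂P| ≤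
        (eLpNorm h ⊤ Q).toReal * (Real.sqrt 2 + 4 / 3) *
          (Real.log (2 / δ) / n) ^ (1 - 1 / α) * Ialpha P Q α ^ (1 / α)} := by
  have hL : 0 < log (2 / δ) := log_pos (by rw [lt_div_iff₀ hδ0]; linarith)
  have hIpos := Ialpha_pos hPQ hI
  have hτ : 0 < τ := hτdef ▸ by positivity
  have hmem : MemLp h ⊤ Q := ⟨hmeas.aestronglyMeasurable, hinf⟩
  have hbound : ∀ᵐ x ∂Q, |h x| ≤ (eLpNorm h ⊤ Q).toReal := by
    rw [toReal_eLpNorm hmem.aestronglyMeasurable]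
    simpa only [Real.norm_eq_abs] using ae_le_lpNorm_exponent_top hmem
  have hδ : 1 - 2 * exp (-log (2 / δ)) = 1 - δ := by
    rw [exp_neg, exp_log (by positivity)]; field_simp
  have := truncated_lr_concentration hPQ hmeas hbound hα1.le hα2 hI hn hXmeas hid hindep hτ hL
  rwa [hδ, truncated_lr_bound_eq (Nat.cast_pos.2 hn) hIpos hL (by linarith) ENNReal.toReal_nonneg
    hτdef] at this
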